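/- arXiv:2007.03004 — 4 statements merged into one kernel-verified Lean document; each statement's English description precedes it below -/
import Mathlib

section
/- Let A be an abelian category satisfying AB4 and V a filtered object (an N^op-indexed diagram of monomorphisms F_0 V ← F_1 V ← F_2 V ← ...). Then for each e there is a natural isomorphism between lim_{a≥e} coker(F_a V → F_e V) and F_e V̂ := ker( lim_a coker(F_a V → F_0 V) → coker(F_e V → F_0 V) ). -/
/-!
STATEMENT 0: Let `A` be an abelian category satisfying AB4 and `V` a filtered object
(an `ℕᵒᵖ`-indexed diagram of monomorphisms `F₀V ← F₁V ← ⋯`). Then for each `e` there is a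
natural isomorphism between `lim_{a ≥ e} coker (F_a V → F_e V)` and
`F_e V̂ := ker (lim_a coker (F_a V → F₀ V) → coker (F_e V → F₀ V))`.
-/

open CategoryTheory CategoryTheory.Limits Opposite

universe v u

variable {A : Type u} [Category.{v} A] [Abelian A]
  [HasCoproducts A] [AB4 A] [HasLimitsOfShape ℕᵒᵖ A]

/-- A filtered object: an `ℕᵒᵖ`-indexed diagram all of whose structure maps are monos. -/
def IsFilteredObj (V : ℕᵒᵖ ⥤ A) : Prop :=
  ∀ {a b : ℕᵒᵖ} (f : a ⟶ b), Mono (V.map f)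

/-- The diagram `a ↦ coker (i_a : F_a V ⟶ F_0 V)`. -/
noncomputable def cokerDiagram (V : ℕᵒᵖ ⥤ A) : ℕᵒᵖ ⥤ A where
  obj a := cokernel (V.map (homOfLE (Nat.zero_le a.unop)).op)
  map {a b} f := cokernel.map _ _ (V.map f) (𝟙 _) (by
    rw [Category.comp_id, ← V.map_comp]
    congr 1)
  map_id := by intro a; ext; simp
  map_comp := by intro a b c f g; ext; simp

/-- The diagram `k ↦ coker (F_{e+k} V ⟶ F_e V)`, indexing the objects
`coker (F_a V → F_e V)` for `a ≥ e`. -/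
noncomputable def relCokerDiagram (V : ℕᵒᵖ ⥤ A) (e : ℕ) : ℕᵒᵖ ⥤ A where
  obj k := cokernel (V.map (homOfLE (Nat.le_add_right e k.unop)).op)
  map {a b} f := cokernel.map _ _
    (V.map (homOfLE (Nat.add_le_add_left (leOfHom f.unop) e)).op) (𝟙 _) (by
      rw [Category.comp_id, ← V.map_comp]
      congr 1)
  map_id := by intro a; ext; simp
  map_comp := by intro a b c f g; ext; simp

/-!
Reindexing along `k ↦ e + k`, which is initial in `ℕᵒᵖ`, identifies `lim_a coker i_a` with
`lim_k coker (F_{e+k} V → F₀ V)` and turns the projection to `coker i_e` into the projection to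
`k = 0`. Since `F_e V → F₀ V` is mono, the third isomorphism theorem gives, naturally in `k`,
left exact sequences
`0 → coker (F_{e+k} V → F_e V) → coker (F_{e+k} V → F₀ V) → coker (F_e V → F₀ V)`,
and limits preserve kernels.
-/

section ThirdIsomorphism

-- `h` stands for `f ≫ g`; keeping it separate lets the lemmas apply when the composite is
-- only propositionally `h`, as with `V.map` of composites in `ℕᵒᵖ`.
variable {C : Type*} [Category C] [Abelian C] {X Y Z : C} (f : X ⟶ Y) (g : Y ⟶ Z) (h : X ⟶ Z)
  (w : f ≫ g = h)
include w

theorem cokernelMap_comp_cokernelMap_eq_zero :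
    cokernel.map f h (𝟙 X) g (by simp [w]) ≫ cokernel.map h g f (𝟙 Z) (by simp [w]) = 0 := by
  ext
  simp

noncomputable def isLimitKernelForkCokernelMap [Mono g] :
    IsLimit (KernelFork.ofι _ (cokernelMap_comp_cokernelMap_eq_zero f g h w)) := by
  subst w
  have : Mono (kernelCokernelCompSequence.snakeInput f g).L₃.f :=
    Abelian.mono_cokernel_map_of_isPullback
      (show IsPullback f (𝟙 X) g (f ≫ g) from .of_vert_isIso_mono ⟨by simp⟩)
  exact (kernelCokernelCompSequence.snakeInput f g).L₃_exact.fIsKernel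

end ThirdIsomorphism

section LimitOfKernels

variable {C : Type*} [Category C] [HasZeroMorphisms C] {J : Type*} [Category J] {t : J}
  (ht : IsTerminal t) {F G : J ⥤ C} [HasLimit F] [HasLimit G] (η : F ⟶ G)
  (hw : ∀ j, η.app j ≫ G.map (ht.from j) = 0)
include hw

theorem limMap_π_eq_zero_of_isTerminal : limMap η ≫ limit.π G t = 0 := by
  simpa [limMap_π, ht.hom_ext (ht.from t) (𝟙 t)] using limit.π F t ≫= hw t

noncomputable def isLimitKernelForkLimMap
    (hη : ∀ j, IsLimit (KernelFork.ofι (η.app j) (hw j))) :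
    IsLimit (KernelFork.ofι (limMap η) (limMap_π_eq_zero_of_isTerminal ht η hw)) := by
  have (j : J) : Mono (η.app j) := Fork.IsLimit.mono (hη j)
  refine KernelFork.IsLimit.ofι' _ _ (fun {T} u hu ↦ ?_)
  have hu' (j : J) : (u ≫ limit.π G j) ≫ G.map (ht.from j) = 0 := by simpa using hu
  let l (j : J) : T ⟶ F.obj j := (hη j).lift (KernelFork.ofι _ (hu' j))
  have hl (j : J) : l j ≫ η.app j = u ≫ limit.π G j := (hη j).fac _ .zero
  refine ⟨limit.lift F ⟨T, { app := l, naturality := fun j j' φ ↦ ?_ }⟩, ?_⟩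
  · dsimp
    rw [Category.id_comp, ← cancel_mono (η.app j'), Category.assoc, η.naturality,
      reassoc_of% hl j, hl j', limit.w]
  · ext j
    simp [hl]

end LimitOfKernels

section FilteredObject

variable {C : Type*} [Category C] [Abelian C] (V : ℕᵒᵖ ⥤ C) (e : ℕ)

-- Reducible, so that `(shiftNat e ⋙ cokerDiagram V).obj k` is seen as a cokernel at `e + k.unop`.
abbrev shiftNat : ℕᵒᵖ ⥤ ℕᵒᵖ where
  obj k := op (e + k.unop)
  map f := (homOfLE (Nat.add_le_add_left (leOfHom f.unop) e)).op

instance : (shiftNat e).Initial :=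
  Functor.initial_of_exists_of_isCofiltered _
    (fun k ↦ ⟨k, ⟨(homOfLE (Nat.le_add_left k.unop e)).op⟩⟩)
    (fun _ _ ↦ ⟨_, 𝟙 _, Subsingleton.elim _ _⟩)

def isTerminalOpZero : IsTerminal (op 0 : ℕᵒᵖ) := isInitialBot.op

noncomputable def relCokerToCoker : relCokerDiagram V e ⟶ shiftNat e ⋙ cokerDiagram V where
  app k := cokernel.map (V.map (homOfLE (Nat.le_add_right e k.unop)).op)
    (V.map (homOfLE (Nat.zero_le (e + k.unop))).op) (𝟙 _) (V.map (homOfLE (Nat.zero_le e)).op) (by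
    rw [← V.map_comp]
    exact (Category.id_comp _).symm)
  naturality _ _ _ := by
    dsimp [relCokerDiagram, cokerDiagram]
    ext
    simp

theorem relCokerToCoker_app_comp_map_eq_zero (k : ℕᵒᵖ) :
    (relCokerToCoker V e).app k ≫ (shiftNat e ⋙ cokerDiagram V).map (isTerminalOpZero.from k) =
      0 :=
  cokernelMap_comp_cokernelMap_eq_zero _ _ _ (by rw [← V.map_comp]; rfl)

noncomputable def isLimitRelCokerToCokerApp (hV : IsFilteredObj V) (k : ℕᵒᵖ) :
    IsLimit (KernelFork.ofι _ (relCokerToCoker_app_comp_map_eq_zero V e k)) :=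
  have := hV (homOfLE (Nat.zero_le e)).op
  isLimitKernelForkCokernelMap _ _ _ (by rw [← V.map_comp]; rfl)

end FilteredObject

/-- For each `e`, there is a natural isomorphism
`lim_{a ≥ e} coker (F_a V → F_e V) ≅ F_e V̂ = ker (lim_a coker i_a → coker i_e)`. -/
theorem statement0 (V : ℕᵒᵖ ⥤ A) (hV : IsFilteredObj V) (e : ℕ) :
    Nonempty (limit (relCokerDiagram V e) ≅
      kernel (limit.π (cokerDiagram V) (op e))) := by
  let isKernel :=
    isLimitKernelForkLimMap isTerminalOpZero _ _ (isLimitRelCokerToCokerApp V e hV)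
  exact ⟨isKernel.conePointUniqueUpToIso (kernelIsKernel _) ≪≫
    (kernelIsIsoComp (limit.pre _ (shiftNat e)) _).symm ≪≫ kernelIsoOfEq (limit.pre_π _ _ _)⟩
end

section
/- In an abelian category with N^op-limits satisfying AB4, the completion of any filtered object is itself a complete filtered object: the structure maps F_{e'} V̂ → F_e V̂ (for e' > e) are monomorphisms, and the natural map F_0 V̂ → lim_a coker(F_a V̂ → F_0 V̂) is an isomorphism. -/
/-!
STATEMENT 1: In an abelian category with `ℕᵒᵖ`-limits satisfying AB4, the completion of any
filtered object is itself a complete filtered object: the structure maps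
`F_{e'} V̂ → F_e V̂` (for `e' > e`) are monomorphisms, and the natural map
`F₀ V̂ → lim_a coker (F_a V̂ → F₀ V̂)` is an isomorphism.
-/

open CategoryTheory CategoryTheory.Limits Opposite

universe v u

variable {A : Type u} [Category.{v} A] [Abelian A]
  [HasCoproducts A] [AB4 A] [HasLimitsOfShape ℕᵒᵖ A]

/-- The completion `V̂` of a filtered object, with `F_e V̂ = ker (lim_a coker i_a → coker i_e)`. -/
noncomputable def completion (V : ℕᵒᵖ ⥤ A) : ℕᵒᵖ ⥤ A where
  obj e := kernel (limit.π (cokerDiagram V) e)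
  map {a b} f := kernel.lift _ (kernel.ι _) (by
    rw [← limit.w (cokerDiagram V) f, ← Category.assoc, kernel.condition, zero_comp])
  map_id := by intro a; ext; simp
  map_comp := by intro a b c f g; ext; simp

/-- The canonical map `F₀ W ⟶ lim_a coker (F_a W → F₀ W)`, induced by the cokernel
projections.  A filtered object `W` is complete when this map is an isomorphism. -/
noncomputable def toCompletionZero (W : ℕᵒᵖ ⥤ A) : W.obj (op 0) ⟶ limit (cokerDiagram W) :=
  limit.lift _
    { pt := W.obj (op 0)
      π :=
        { app := fun _ => cokernel.π _
          naturality := by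
            intro a b f
            simp [cokerDiagram, cokernel.map] } }

/-- A filtered object is complete when the canonical map
`F₀ W → lim_a coker (F_a W → F₀ W)` is an isomorphism. -/
def IsCompleteObj (W : ℕᵒᵖ ⥤ A) : Prop := IsIso (toCompletionZero W)

/-!
Since `coker i₀ = 0`, the object `F₀ V̂` is the whole limit `L = lim_a coker i_a`, and
`F_e V̂ → F₀ V̂` is the kernel of the projection `L → coker i_e`. Hence
`coker (F_e V̂ → F₀ V̂)` embeds into `coker i_e`. The canonical map
`F₀ V̂ → lim_a coker (F_a V̂ → F₀ V̂)` followed by the limit of these embeddings is the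
isomorphism `F₀ V̂ ≅ L`; since a limit of monomorphisms is a monomorphism, both factors are
isomorphisms.
-/

section

universe v₁ u₁

variable {C : Type u₁} [Category.{v₁} C] [Abelian C]

lemma mono_cokernel_desc_of_isKernel_fac {X Y L Z : C} {g : L ⟶ Z} {ι : X ⟶ L}
    {w : ι ≫ g = 0} (hι : IsLimit (KernelFork.ofι ι w)) (k : X ⟶ Y) (m : Y ⟶ L) [Mono m]
    (hk : k ≫ m = ι) :
    Mono (cokernel.desc k (m ≫ g) (by rw [← Category.assoc, hk, w])) := by
  have hw : k ≫ m ≫ g = 0 := by rw [← Category.assoc, hk, w]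
  have : Mono ι := Fork.IsLimit.mono hι
  have : Mono k := mono_of_mono_fac hk
  have hKernel : IsLimit (KernelFork.ofι k hw) :=
    KernelFork.IsLimit.ofι' k hw fun x hx =>
      let l := KernelFork.IsLimit.lift' hι (x ≫ m) (by rwa [Category.assoc])
      ⟨l.1, by rw [← cancel_mono m, Category.assoc, hk]; exact l.2⟩
  exact (ShortComplex.mk k (m ≫ g) hw).exact_iff_mono_cokernel_desc.mp
    (ShortComplex.exact_of_f_is_kernel _ hKernel)

lemma cokernel_π_comp_cokerDiagram_map (W : ℕᵒᵖ ⥤ C) {a b : ℕᵒᵖ} (f : a ⟶ b) :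
    cokernel.π (W.map (homOfLE (Nat.zero_le a.unop)).op) ≫ (cokerDiagram W).map f =
      cokernel.π (W.map (homOfLE (Nat.zero_le b.unop)).op) := by
  simp [cokerDiagram]

variable [HasLimitsOfShape ℕᵒᵖ C] (V : ℕᵒᵖ ⥤ C)

-- `kernel.ι`, with its source stated as `(completion V).obj e` so that instance search and
-- rewriting apply to it in composites with `(completion V).map`.
noncomputable def completionι (e : ℕᵒᵖ) : (completion V).obj e ⟶ limit (cokerDiagram V) :=
  kernel.ι _

instance mono_completionι (e : ℕᵒᵖ) : Mono (completionι V e) := inferInstanceAs (Mono (kernel.ι _))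

lemma completionι_comp_π (e : ℕᵒᵖ) : completionι V e ≫ limit.π _ e = 0 :=
  kernel.condition _

noncomputable def isLimitCompletionι (e : ℕᵒᵖ) :
    IsLimit (KernelFork.ofι (completionι V e) (completionι_comp_π V e)) :=
  kernelIsKernel _

lemma completion_map_comp_completionι {a b : ℕᵒᵖ} (f : a ⟶ b) :
    (completion V).map f ≫ completionι V b = completionι V a :=
  kernel.lift_ι _ _ _

lemma isFilteredObj_completion : IsFilteredObj (completion V) := fun f =>
  mono_of_mono_fac (completion_map_comp_completionι V f)

lemma limit_π_cokerDiagram_zero : limit.π (cokerDiagram V) (op 0) = 0 := by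
  have : IsIso (V.map (homOfLE (Nat.zero_le 0)).op) := by
    rw [show (homOfLE (Nat.zero_le 0)).op = 𝟙 (op 0) from rfl, V.map_id]
    infer_instance
  exact (isZero_cokernel_of_epi _).eq_of_tgt _ _

instance isIso_completionι_zero : IsIso (completionι V (op 0)) :=
  kernel.ι_of_zero (limit_π_cokerDiagram_zero V)

noncomputable def cokerComparison : cokerDiagram (completion V) ⟶ cokerDiagram V where
  app e := cokernel.desc _ (completionι V (op 0) ≫ limit.π _ e) (by
    rw [← Category.assoc, completion_map_comp_completionι, completionι_comp_π])
  naturality a b f := by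
    apply coequalizer.hom_ext
    show cokernel.π _ ≫ _ = cokernel.π _ ≫ _
    erw [← Category.assoc, cokernel_π_comp_cokerDiagram_map, cokernel.π_desc, ← Category.assoc,
      cokernel.π_desc, Category.assoc, limit.w]

instance mono_cokerComparison_app (e : ℕᵒᵖ) : Mono ((cokerComparison V).app e) :=
  mono_cokernel_desc_of_isKernel_fac (isLimitCompletionι V e) _ _
    (completion_map_comp_completionι V _)

lemma toCompletionZero_comp_limMap_cokerComparison :
    toCompletionZero (completion V) ≫ limMap (cokerComparison V) = completionι V (op 0) := by
  ext e
  rw [Category.assoc, limMap_π, toCompletionZero, limit.lift_π_assoc]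
  exact cokernel.π_desc _ _ _

lemma isCompleteObj_completion : IsCompleteObj (completion V) := by
  have : IsIso (toCompletionZero (completion V) ≫ limMap (cokerComparison V)) := by
    rw [toCompletionZero_comp_limMap_cokerComparison]
    infer_instance
  have : Epi (limMap (cokerComparison V)) := epi_of_epi (toCompletionZero (completion V)) _
  have : IsIso (limMap (cokerComparison V)) := isIso_of_mono_of_epi _
  exact IsIso.of_isIso_comp_right _ (limMap (cokerComparison V))

end

theorem statement1_general (V : ℕᵒᵖ ⥤ A) :
    IsFilteredObj (completion V) ∧ IsCompleteObj (completion V) :=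
  ⟨isFilteredObj_completion V, isCompleteObj_completion V⟩

/-- The completion of a filtered object is again a filtered object (the structure maps
are monomorphisms), and it is complete. -/
theorem statement1 (V : ℕᵒᵖ ⥤ A) (hV : IsFilteredObj V) :
    IsFilteredObj (completion V) ∧ IsCompleteObj (completion V) :=
  statement1_general V
end

section
/- The full subcategory of complete filtered objects inside filtered objects in an abelian category (with N^op-limits, AB4) is reflective: the completion functor V ↦ V̂ is left adjoint to the inclusion, with unit the natural map r : V → V̂, and the unit is an isomorphism precisely on complete objects. -/
/-!
STATEMENT 2: The full subcategory of complete filtered objects inside filtered objects in an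
abelian category (with `ℕᵒᵖ`-limits, AB4) is reflective: the completion functor `V ↦ V̂` is left
adjoint to the inclusion, with unit the natural map `r : V → V̂`, and the unit is an isomorphism
precisely on complete objects.

Reflectivity with unit `r` is rendered by the universal property: the completion of a filtered
object is a complete filtered object, and for every filtered `V` and every complete filtered `W`,
precomposition with `r_V` is a bijection `Hom(V̂, W) ≅ Hom(V, W)`.
-/

open CategoryTheory CategoryTheory.Limits Opposite

universe v u

variable {A : Type u} [Category.{v} A] [Abelian A]
  [HasCoproducts A] [AB4 A] [HasLimitsOfShape ℕᵒᵖ A]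

/-- The canonical (unit) morphism `r : V ⟶ V̂`. -/
noncomputable def unitMap (V : ℕᵒᵖ ⥤ A) : V ⟶ completion V where
  app e := kernel.lift _ (V.map (homOfLE (Nat.zero_le e.unop)).op ≫ toCompletionZero V) (by
    rw [Category.assoc]
    have : toCompletionZero V ≫ limit.π (cokerDiagram V) e = cokernel.π _ := by
      simp [toCompletionZero]
      rfl
    rw [this]
    exact cokernel.condition _)
  naturality := by
    intro a b f
    dsimp only [completion]
    ext
    simp only [Category.assoc, kernel.lift_ι, kernel.lift_ι_assoc]
    rw [← Category.assoc, ← V.map_comp]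
    congr 2

/-!
Write `L = lim_a coker (i_a : F_a V → F_0 V)` with projections `π_a`. Since `i_0 = 𝟙`,
`π_0 = 0` and `F_0 V̂ = L`; since `F_0 V → L → coker i_a` is the cokernel map, each `π_a` is
epi, so `coker (F_a V̂ → F_0 V̂) ≅ coker (ker π_a) ≅ coker i_a`, naturally in `a`. Hence `V̂` is
complete and `r` induces an isomorphism of cokernel diagrams. A map into a filtered object is
determined by its `0`-th component, and for complete `W` that component is recovered from the
induced map of cokernel diagrams: this gives injectivity. For complete `W`, `F_e W` is the
kernel of `F_0 W ≅ L → coker i_e`, so `r_W` is invertible and `φ ↦ φ̂ ≫ r_W⁻¹` inverts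
precomposition by `r_V`.
-/

namespace FilteredCompletion

section Abelian

variable {C : Type u} [Category.{v} C] [Abelian C]

lemma isIso_kernel_lift_of_isIso {K X Y : C} (i : K ⟶ X) [Mono i] (t : X ⟶ Y) [IsIso t]
    (p : Y ⟶ cokernel i) (h : t ≫ p = cokernel.π i) :
    IsIso (kernel.lift p (i ≫ t) (by rw [Category.assoc, h, cokernel.condition])) := by
  refine ⟨Abelian.monoLift i (kernel.ι p ≫ inv t) (by simp [← h]), ?_, ?_⟩
  · simp [← cancel_mono i]
  · simp [← cancel_mono (kernel.ι p)]

lemma isIso_cokernel_desc_of_isIso {Y Z K : C} (p : Z ⟶ K) [Epi p] (i : kernel p ⟶ Y)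
    (e : Y ⟶ Z) [IsIso e] (h : i ≫ e = kernel.ι p) :
    IsIso (cokernel.desc i (e ≫ p) (by rw [← Category.assoc, h, kernel.condition])) := by
  have : cokernel.desc i (e ≫ p) (by rw [← Category.assoc, h, kernel.condition]) =
      (cokernel.mapIso i (kernel.ι p) (Iso.refl _) (asIso e) (by simp [h])).hom ≫
        Abelian.factorThruCoimage p := by
    ext
    simp [cokernel.mapIso]
  rw [this]
  infer_instance

end Abelian

variable {A : Type u} [Category.{v} A] {V W : ℕᵒᵖ ⥤ A}

variable (V) in
abbrev incl (e : ℕᵒᵖ) : V.obj e ⟶ V.obj (op 0) :=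
  V.map (homOfLE (Nat.zero_le e.unop)).op

lemma incl_zero : incl V (op 0) = 𝟙 _ :=
  V.map_id _

lemma _root_.IsFilteredObj.hom_ext {X : ℕᵒᵖ ⥤ A} (hW : IsFilteredObj W) {g h : X ⟶ W}
    (h₀ : g.app (op 0) = h.app (op 0)) : g = h := by
  ext e
  have : Mono (incl W e) := hW _
  rw [← cancel_mono (incl W e), ← g.naturality, ← h.naturality, h₀]

variable [Abelian A]

variable (V) in
noncomputable def cokerπ (e : ℕᵒᵖ) : V.obj (op 0) ⟶ (cokerDiagram V).obj e :=
  cokernel.π (incl V e)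

instance (e : ℕᵒᵖ) : Epi (cokerπ V e) :=
  inferInstanceAs (Epi (cokernel.π _))

noncomputable def cokerMap (φ : V ⟶ W) : cokerDiagram V ⟶ cokerDiagram W where
  app a := cokernel.map (incl V a) (incl W a) (φ.app a) (φ.app (op 0)) (φ.naturality _)
  naturality a b f := by
    apply coequalizer.hom_ext
    simp [cokerDiagram]

lemma cokerπ_cokerMap_app (φ : V ⟶ W) (a : ℕᵒᵖ) :
    cokerπ V a ≫ (cokerMap φ).app a = φ.app (op 0) ≫ cokerπ W a :=
  cokernel.π_desc _ _ _

lemma cokerMap_comp {X : ℕᵒᵖ ⥤ A} (φ : V ⟶ W) (ψ : W ⟶ X) :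
    cokerMap (φ ≫ ψ) = cokerMap φ ≫ cokerMap ψ := by
  ext a
  rw [NatTrans.comp_app, ← cancel_epi (cokerπ V a), cokerπ_cokerMap_app,
    reassoc_of% cokerπ_cokerMap_app, cokerπ_cokerMap_app, NatTrans.comp_app, Category.assoc]

variable [HasLimitsOfShape ℕᵒᵖ A]

lemma toCompletionZero_π (e : ℕᵒᵖ) :
    toCompletionZero V ≫ limit.π (cokerDiagram V) e = cokerπ V e :=
  limit.lift_π _ _

lemma toCompletionZero_naturality (φ : V ⟶ W) :
    toCompletionZero V ≫ limMap (cokerMap φ) = φ.app (op 0) ≫ toCompletionZero W := by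
  ext e
  rw [Category.assoc, limMap_π, reassoc_of% toCompletionZero_π, cokerπ_cokerMap_app,
    Category.assoc, toCompletionZero_π]

instance (e : ℕᵒᵖ) : Epi (limit.π (cokerDiagram V) e) :=
  epi_of_epi_fac (toCompletionZero_π e)

lemma limit_π_zero : limit.π (cokerDiagram V) (op 0) = 0 := by
  have : Epi (incl V (op 0)) := by rw [incl_zero]; infer_instance
  exact (isZero_cokernel_of_epi (incl V (op 0))).eq_of_tgt _ _

variable (V) in
noncomputable def completionι (e : ℕᵒᵖ) : (completion V).obj e ⟶ limit (cokerDiagram V) :=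
  kernel.ι (limit.π (cokerDiagram V) e)

instance (e : ℕᵒᵖ) : Mono (completionι V e) :=
  inferInstanceAs (Mono (kernel.ι _))

instance : IsIso (completionι V (op 0)) :=
  kernel.ι_of_zero limit_π_zero

lemma completionι_π (e : ℕᵒᵖ) : completionι V e ≫ limit.π (cokerDiagram V) e = 0 :=
  kernel.condition _

lemma completion_map_ι {a b : ℕᵒᵖ} (f : a ⟶ b) :
    (completion V).map f ≫ completionι V b = completionι V a :=
  kernel.lift_ι _ _ _

lemma unitMap_app_ι (e : ℕᵒᵖ) :
    (unitMap V).app e ≫ completionι V e = incl V e ≫ toCompletionZero V :=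
  kernel.lift_ι _ _ _

lemma unitMap_app_zero_ι : (unitMap V).app (op 0) ≫ completionι V (op 0) = toCompletionZero V := by
  rw [unitMap_app_ι, incl_zero, Category.id_comp]

lemma isFilteredObj_completion : IsFilteredObj (completion V) := fun f =>
  mono_of_mono_fac (completion_map_ι f)

variable (V) in
noncomputable def cokerCompletionToCoker : cokerDiagram (completion V) ⟶ cokerDiagram V where
  app a := cokernel.desc _ (completionι V (op 0) ≫ limit.π _ a)
    (by rw [← Category.assoc, completion_map_ι, completionι_π])
  naturality a b f := by
    apply coequalizer.hom_ext
    simp only [cokerDiagram, cokernel.π_desc, cokernel.π_desc_assoc, Category.id_comp]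
    exact (completionι V (op 0) ≫= (limit.w (cokerDiagram V) f).symm).trans
      (Category.assoc _ _ _).symm

lemma cokerπ_cokerCompletionToCoker_app (a : ℕᵒᵖ) :
    cokerπ (completion V) a ≫ (cokerCompletionToCoker V).app a =
      completionι V (op 0) ≫ limit.π _ a :=
  cokernel.π_desc _ _ _

instance : IsIso (cokerCompletionToCoker V) := by
  have (a : ℕᵒᵖ) : IsIso ((cokerCompletionToCoker V).app a) :=
    isIso_cokernel_desc_of_isIso _ _ _ (completion_map_ι _)
  exact NatIso.isIso_of_isIso_app _

lemma isCompleteObj_completion : IsCompleteObj (completion V) := by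
  have h : toCompletionZero (completion V) ≫ limMap (cokerCompletionToCoker V) =
      completionι V (op 0) := by
    ext a
    rw [Category.assoc, limMap_π, reassoc_of% toCompletionZero_π,
      cokerπ_cokerCompletionToCoker_app]
  have : IsIso (toCompletionZero (completion V) ≫ limMap (cokerCompletionToCoker V)) := by
    rw [h]; infer_instance
  exact IsIso.of_isIso_comp_right _ (limMap (cokerCompletionToCoker V))

noncomputable def completionMap (φ : V ⟶ W) : completion V ⟶ completion W where
  app e := kernel.map _ _ (limMap (cokerMap φ)) ((cokerMap φ).app e) (limMap_π _ _).symm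
  naturality a b f := by
    rw [← cancel_mono (completionι W b)]
    simp [completion, completionι]

lemma completionMap_app_ι (φ : V ⟶ W) (e : ℕᵒᵖ) :
    (completionMap φ).app e ≫ completionι W e = completionι V e ≫ limMap (cokerMap φ) :=
  kernel.lift_ι _ _ _

lemma unitMap_naturality (φ : V ⟶ W) : unitMap V ≫ completionMap φ = φ ≫ unitMap W := by
  ext e
  rw [NatTrans.comp_app, NatTrans.comp_app, ← cancel_mono (completionι W e), Category.assoc,
    completionMap_app_ι, reassoc_of% unitMap_app_ι, toCompletionZero_naturality, Category.assoc,
    unitMap_app_ι, ← Category.assoc, ← Category.assoc]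
  exact congrArg (· ≫ toCompletionZero W) (φ.naturality _)

lemma isCompleteObj_of_isIso_unitMap [IsIso (unitMap V)] : IsCompleteObj V := by
  rw [IsCompleteObj, ← unitMap_app_zero_ι]
  infer_instance

lemma isIso_unitMap_of_isCompleteObj (hV : IsFilteredObj V) (hVc : IsCompleteObj V) :
    IsIso (unitMap V) := by
  have : IsIso (toCompletionZero V) := hVc
  have (e : ℕᵒᵖ) : IsIso ((unitMap V).app e) :=
    have : Mono (incl V e) := hV _
    isIso_kernel_lift_of_isIso (incl V e) (toCompletionZero V) _ (toCompletionZero_π e)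
  exact NatIso.isIso_of_isIso_app _

lemma cokerMap_unitMap_comp_cokerCompletionToCoker :
    cokerMap (unitMap V) ≫ cokerCompletionToCoker V = 𝟙 _ := by
  ext a
  rw [NatTrans.comp_app, NatTrans.id_app, ← cancel_epi (cokerπ V a),
    reassoc_of% cokerπ_cokerMap_app, cokerπ_cokerCompletionToCoker_app,
    reassoc_of% unitMap_app_zero_ι, toCompletionZero_π, Category.comp_id]

instance : IsIso (cokerMap (unitMap V)) :=
  IsIso.of_isIso_fac_right cokerMap_unitMap_comp_cokerCompletionToCoker

lemma unitMap_comp_injective (hW : IsFilteredObj W) (hWc : IsCompleteObj W) :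
    Function.Injective (fun g : completion V ⟶ W => unitMap V ≫ g) := by
  intro g₁ g₂ h
  have : IsIso (toCompletionZero W) := hWc
  have hcoker : cokerMap g₁ = cokerMap g₂ := by
    rw [← cancel_epi (cokerMap (unitMap V)), ← cokerMap_comp, ← cokerMap_comp]
    exact congrArg cokerMap h
  apply hW.hom_ext
  rw [← cancel_mono (toCompletionZero W), ← toCompletionZero_naturality,
    ← toCompletionZero_naturality, hcoker]

lemma unitMap_comp_surjective (hW : IsFilteredObj W) (hWc : IsCompleteObj W) :
    Function.Surjective (fun g : completion V ⟶ W => unitMap V ≫ g) := by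
  intro φ
  have := isIso_unitMap_of_isCompleteObj hW hWc
  refine ⟨completionMap φ ≫ inv (unitMap W), ?_⟩
  simp only [reassoc_of% unitMap_naturality, IsIso.hom_inv_id, Category.comp_id]

end FilteredCompletion

/-- Complete filtered objects are a reflective subcategory of filtered objects, with the
completion as reflector and the canonical map `r` as unit; moreover the unit is an isomorphism
precisely on the complete objects. -/
theorem statement2 :
    (∀ V : ℕᵒᵖ ⥤ A, IsFilteredObj V →
        IsFilteredObj (completion V) ∧ IsCompleteObj (completion V)) ∧
    (∀ V W : ℕᵒᵖ ⥤ A, IsFilteredObj V → IsFilteredObj W → IsCompleteObj W →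
        Function.Bijective (fun g : completion V ⟶ W => unitMap V ≫ g)) ∧
    (∀ V : ℕᵒᵖ ⥤ A, IsFilteredObj V → (IsIso (unitMap V) ↔ IsCompleteObj V)) := by
  open FilteredCompletion in
  exact ⟨fun _ _ => ⟨isFilteredObj_completion, isCompleteObj_completion⟩,
    fun _ _ _ hW hWc => ⟨unitMap_comp_injective hW hWc, unitMap_comp_surjective hW hWc⟩,
    fun _ hV => ⟨fun _ => isCompleteObj_of_isIso_unitMap, isIso_unitMap_of_isCompleteObj hV⟩⟩
end

section
/- Let R be a commutative ring and let C be the class of monomorphisms of R-modules with flat cokernel. Then C is closed under pushout product: if A_1 → X_1 and A_2 → X_2 are monomorphisms with flat cokernels C_1, C_2, then the induced map (X_1 ⊗ A_2) ⊔_{A_1 ⊗ A_2} (A_1 ⊗ X_2) → X_1 ⊗ X_2 is a monomorphism with cokernel isomorphic to C_1 ⊗ C_2 (in particular flat). -/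
/-!
STATEMENT 7: Let `R` be a commutative ring and `C` the class of monomorphisms of `R`-modules
with flat cokernel.  Then `C` is closed under the pushout product: if `f₁ : A₁ → X₁` and
`f₂ : A₂ → X₂` are injective with flat cokernels `C₁`, `C₂`, then the induced map
`(X₁ ⊗ A₂) ⊔_{A₁ ⊗ A₂} (A₁ ⊗ X₂) → X₁ ⊗ X₂` is injective and its cokernel is isomorphic to
`C₁ ⊗ C₂` (in particular flat).
-/

open TensorProduct

variable {R : Type*} [CommRing R]
variable {A₁ X₁ A₂ X₂ : Type*}
variable [AddCommGroup A₁] [AddCommGroup X₁] [AddCommGroup A₂] [AddCommGroup X₂]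
variable [Module R A₁] [Module R X₁] [Module R A₂] [Module R X₂]

/-- The map `A₁ ⊗ A₂ → (X₁ ⊗ A₂) × (A₁ ⊗ X₂)`, `a ↦ ((f₁ ⊗ 1) a, −(1 ⊗ f₂) a)`, whose
cokernel is the pushout of the span `X₁ ⊗ A₂ ← A₁ ⊗ A₂ → A₁ ⊗ X₂`. -/
noncomputable def pushoutRelation (f₁ : A₁ →ₗ[R] X₁) (f₂ : A₂ →ₗ[R] X₂) :
    A₁ ⊗[R] A₂ →ₗ[R] (X₁ ⊗[R] A₂) × (A₁ ⊗[R] X₂) :=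
  (TensorProduct.map f₁ (LinearMap.id : A₂ →ₗ[R] A₂)).prod
    (-(TensorProduct.map (LinearMap.id : A₁ →ₗ[R] A₁) f₂))

/-- The pushout `(X₁ ⊗ A₂) ⊔_{A₁ ⊗ A₂} (A₁ ⊗ X₂)`. -/
noncomputable abbrev PushoutCorner (f₁ : A₁ →ₗ[R] X₁) (f₂ : A₂ →ₗ[R] X₂) :=
  ((X₁ ⊗[R] A₂) × (A₁ ⊗[R] X₂)) ⧸ LinearMap.range (pushoutRelation f₁ f₂)

/-- The pushout-product map `(X₁ ⊗ A₂) ⊔_{A₁ ⊗ A₂} (A₁ ⊗ X₂) → X₁ ⊗ X₂`. -/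
noncomputable def pushoutProductMap (f₁ : A₁ →ₗ[R] X₁) (f₂ : A₂ →ₗ[R] X₂) :
    PushoutCorner f₁ f₂ →ₗ[R] X₁ ⊗[R] X₂ :=
  Submodule.liftQ _ ((TensorProduct.map LinearMap.id f₂).coprod (TensorProduct.map f₁ LinearMap.id))
    (by
      rw [LinearMap.range_le_ker_iff]
      ext a₁ a₂
      simp [pushoutRelation])

/-!
By right exactness of `⊗`, the image of `X₁ ⊗ A₂ ⊕ A₁ ⊗ X₂` in `X₁ ⊗ X₂` is the kernel of the
surjection `X₁ ⊗ X₂ → C₁ ⊗ C₂`, which identifies the cokernel. Injectivity is a diagram chase: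
if `(1 ⊗ f₂) u + (f₁ ⊗ 1) v = 0`, then the image of `u` in `C₁ ⊗ A₂` dies in `C₁ ⊗ X₂`, hence
vanishes because `C₁` is flat, so `u = (f₁ ⊗ 1) w`; then `v = -(1 ⊗ f₂) w` because `f₁ ⊗ X₂` is
injective, `C₁` being flat.
-/

lemma LinearMap.rTensor_lTensor_comm_apply {M N P Q : Type*}
    [AddCommGroup M] [AddCommGroup N] [AddCommGroup P] [AddCommGroup Q]
    [Module R M] [Module R N] [Module R P] [Module R Q]
    (f : M →ₗ[R] P) (g : N →ₗ[R] Q) (x : M ⊗[R] N) :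
    f.rTensor Q (g.lTensor M x) = g.lTensor P (f.rTensor N x) := by
  rw [← LinearMap.comp_apply, ← LinearMap.comp_apply,
    LinearMap.rTensor_comp_lTensor, LinearMap.lTensor_comp_rTensor]

lemma LinearMap.rTensor_injective_of_flat_cokernel {A X : Type*}
    [AddCommGroup A] [AddCommGroup X] [Module R A] [Module R X]
    (f : A →ₗ[R] X) (hf : Function.Injective f) [Module.Flat R (X ⧸ LinearMap.range f)]
    (M : Type*) [AddCommGroup M] [Module R M] :
    Function.Injective (f.rTensor M) :=
  (LinearMap.lTensor_inj_iff_rTensor_inj M f).mp <|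
    LinearMap.lTensor_injective_of_exact_of_flat (LinearMap.range f).mkQ
      (Submodule.mkQ_surjective _) f hf f.exact_map_mkQ_range M

section PushoutProduct

variable (f₁ : A₁ →ₗ[R] X₁) (f₂ : A₂ →ₗ[R] X₂)

theorem range_pushoutProductMap :
    LinearMap.range (pushoutProductMap f₁ f₂) =
      LinearMap.ker (TensorProduct.map (LinearMap.range f₁).mkQ (LinearMap.range f₂).mkQ) := by
  rw [TensorProduct.map_ker f₁.exact_map_mkQ_range (Submodule.mkQ_surjective _)
    f₂.exact_map_mkQ_range (Submodule.mkQ_surjective _), pushoutProductMap,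
    Submodule.range_liftQ, LinearMap.range_coprod]
  rfl

noncomputable def cokernelPushoutProductMapEquiv :
    ((X₁ ⊗[R] X₂) ⧸ LinearMap.range (pushoutProductMap f₁ f₂)) ≃ₗ[R]
      ((X₁ ⧸ LinearMap.range f₁) ⊗[R] (X₂ ⧸ LinearMap.range f₂)) :=
  (Submodule.quotEquivOfEq _ _ (range_pushoutProductMap f₁ f₂)).trans
    (LinearMap.quotKerEquivOfSurjective _
      (TensorProduct.map_surjective (Submodule.mkQ_surjective _) (Submodule.mkQ_surjective _)))

variable {f₁ f₂}

theorem ker_coprod_le_range_pushoutRelation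
    (hX : Function.Injective (f₁.rTensor X₂))
    (hC : Function.Injective (f₂.lTensor (X₁ ⧸ LinearMap.range f₁))) :
    LinearMap.ker ((f₂.lTensor X₁).coprod (f₁.rTensor X₂)) ≤
      LinearMap.range (pushoutRelation f₁ f₂) := by
  set π₁ := (LinearMap.range f₁).mkQ
  rintro ⟨u, v⟩ huv
  have huv : f₂.lTensor X₁ u = -f₁.rTensor X₂ v := eq_neg_of_add_eq_zero_left huv
  have hπu : π₁.rTensor A₂ u = 0 := hC <| by
    rw [map_zero, ← LinearMap.rTensor_lTensor_comm_apply, huv, map_neg,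
      ← LinearMap.comp_apply, ← LinearMap.rTensor_comp, LinearMap.range_mkQ_comp,
      LinearMap.rTensor_zero, LinearMap.zero_apply, neg_zero]
  obtain ⟨w, rfl⟩ :=
    (rTensor_exact A₂ f₁.exact_map_mkQ_range (Submodule.mkQ_surjective _) u).mp hπu
  have hv : -f₂.lTensor A₁ w = v := hX <| by
    rw [map_neg, LinearMap.rTensor_lTensor_comm_apply, huv, neg_neg]
  exact ⟨w, Prod.ext rfl hv⟩

theorem pushoutProductMap_injective
    (hX : Function.Injective (f₁.rTensor X₂))
    (hC : Function.Injective (f₂.lTensor (X₁ ⧸ LinearMap.range f₁))) :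
    Function.Injective (pushoutProductMap f₁ f₂) :=
  LinearMap.ker_eq_bot.mp <|
    Submodule.ker_liftQ_eq_bot _ _ _ (ker_coprod_le_range_pushoutRelation hX hC)

end PushoutProduct

theorem statement7 (f₁ : A₁ →ₗ[R] X₁) (f₂ : A₂ →ₗ[R] X₂)
    (h₁ : Function.Injective f₁) (h₂ : Function.Injective f₂)
    (hc₁ : Module.Flat R (X₁ ⧸ LinearMap.range f₁))
    (hc₂ : Module.Flat R (X₂ ⧸ LinearMap.range f₂)) :
    Function.Injective (pushoutProductMap f₁ f₂) ∧
    Nonempty (((X₁ ⊗[R] X₂) ⧸ LinearMap.range (pushoutProductMap f₁ f₂)) ≃ₗ[R]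
      ((X₁ ⧸ LinearMap.range f₁) ⊗[R] (X₂ ⧸ LinearMap.range f₂))) ∧
    Module.Flat R ((X₁ ⊗[R] X₂) ⧸ LinearMap.range (pushoutProductMap f₁ f₂)) :=
  ⟨pushoutProductMap_injective (f₁.rTensor_injective_of_flat_cokernel h₁ X₂)
      (Module.Flat.lTensor_preserves_injective_linearMap f₂ h₂),
    ⟨cokernelPushoutProductMapEquiv f₁ f₂⟩,
    Module.Flat.of_linearEquiv (cokernelPushoutProductMapEquiv f₁ f₂)⟩
end
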